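/- A finitely generated group that embeds in a finitely presented simple group has solvable word problem. -/

import Mathlib

namespace KuznetsovAux

open Part

/-- Projection of an existential over an encodable witness with computable verifier is r.e. -/
theorem rePred_exists {α β} [Primcodable α] [Primcodable β] {f : α → β → Bool}
    (hf : Computable₂ f) : REPred fun a => ∃ b, f a b = true := by
  have hg : Computable₂ fun a (k : ℕ) => ((Encodable.decode (α := β) k).map (f a)).getD false := by
    exact Computable.option_getD
      (Computable.option_map (Computable.decode.comp Computable.snd)
        (hf.comp (Computable.fst.comp Computable.fst) Computable.snd))
      (Computable.const false)
  have hp : Partrec fun a =>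
      Nat.rfind fun k => (((Encodable.decode (α := β) k).map (f a)).getD false : Part Bool) :=
    Partrec.rfind hg.partrec₂
  refine hp.dom_re.of_eq fun a => ?_
  refine (Nat.rfind_dom (p := fun k : ℕ =>
    ((((Encodable.decode (α := β) k).map (f a)).getD false : Bool) : Part Bool))).trans ?_
  constructor
  · rintro ⟨k, hk, -⟩
    rw [Part.coe_some, Part.mem_some_iff] at hk
    rcases h : Encodable.decode (α := β) k with _ | b
    · rw [h] at hk; simp at hk
    · rw [h] at hk; exact ⟨b, hk.symm ▸ rfl⟩
  · rintro ⟨b, hb⟩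
    refine ⟨Encodable.encode b, ?_, fun _ => trivial⟩
    rw [Encodable.encodek]
    simpa using hb.symm

variable {n : ℕ}

theorem primrec_invRev : Primrec (FreeGroup.invRev : List (Fin n × Bool) → List (Fin n × Bool)) := by
  have h : Primrec fun w : List (Fin n × Bool) =>
      (w.map fun p => (p.1, !p.2)).reverse :=
    Primrec.list_reverse.comp <| Primrec.list_map Primrec.id <|
      (Primrec.pair (Primrec.fst.comp Primrec.snd)
        (Primrec.not.comp (Primrec.snd.comp Primrec.snd))).to₂
  exact h.of_eq fun w => by simp [FreeGroup.invRev]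

abbrev Wd (n : ℕ) := List (Fin n × Bool)

theorem primrec_reduce : Primrec (FreeGroup.reduce : Wd n → Wd n) := by
  have h : Primrec fun w : Wd n =>
      List.rec (motive := fun _ => Wd n) ([] : Wd n)
        (fun hd1 _tl1 ih =>
          List.casesOn (motive := fun _ => Wd n) ih [hd1] fun hd2 tl2 =>
            if hd1.1 = hd2.1 ∧ hd1.2 = !hd2.2 then tl2 else hd1 :: hd2 :: tl2) w := by
    refine Primrec.list_rec (f := @id (Wd n)) (σ := Wd n)
      (h := fun (_a : Wd n) (p : (Fin n × Bool) × Wd n × Wd n) =>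
        List.casesOn (motive := fun _ => Wd n) p.2.2 [p.1] fun hd2 tl2 =>
          if p.1.1 = hd2.1 ∧ p.1.2 = !hd2.2 then tl2 else p.1 :: hd2 :: tl2)
      Primrec.id (Primrec.const ([] : Wd n)) ?_
    refine Primrec.to₂ (f := fun a : Wd n × ((Fin n × Bool) × Wd n × Wd n) =>
      List.casesOn (motive := fun _ => Wd n) a.2.2.2 [a.2.1] fun hd2 tl2 =>
        if a.2.1.1 = hd2.1 ∧ a.2.1.2 = !hd2.2 then tl2 else a.2.1 :: hd2 :: tl2) ?_
    have hhd1 : Primrec fun a : Wd n × ((Fin n × Bool) × Wd n × Wd n) => a.2.1 :=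
      Primrec.fst.comp Primrec.snd
    have hih : Primrec fun a : Wd n × ((Fin n × Bool) × Wd n × Wd n) => a.2.2.2 :=
      Primrec.snd.comp (Primrec.snd.comp Primrec.snd)
    refine (Primrec.list_casesOn (f := fun a : Wd n × ((Fin n × Bool) × Wd n × Wd n) => a.2.2.2)
      (σ := Wd n)
      (h := fun (a : Wd n × ((Fin n × Bool) × Wd n × Wd n)) (q : (Fin n × Bool) × Wd n) =>
        if a.2.1.1 = q.1.1 ∧ a.2.1.2 = !q.1.2 then q.2 else a.2.1 :: q.1 :: q.2)
      hih (Primrec.list_cons.comp hhd1 (Primrec.const ([] : Wd n))) ?_).of_eq fun a => rfl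
    refine Primrec.to₂ (f := fun b : (Wd n × ((Fin n × Bool) × Wd n × Wd n)) × ((Fin n × Bool) × Wd n) =>
      if b.1.2.1.1 = b.2.1.1 ∧ b.1.2.1.2 = !b.2.1.2 then b.2.2 else b.1.2.1 :: b.2.1 :: b.2.2) ?_
    have hhd1' : Primrec fun b : (Wd n × ((Fin n × Bool) × Wd n × Wd n)) × ((Fin n × Bool) × Wd n) => b.1.2.1 :=
      Primrec.fst.comp (Primrec.snd.comp Primrec.fst)
    have hhd2 : Primrec fun b : (Wd n × ((Fin n × Bool) × Wd n × Wd n)) × ((Fin n × Bool) × Wd n) => b.2.1 :=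
      Primrec.fst.comp Primrec.snd
    have htl2 : Primrec fun b : (Wd n × ((Fin n × Bool) × Wd n × Wd n)) × ((Fin n × Bool) × Wd n) => b.2.2 :=
      Primrec.snd.comp Primrec.snd
    have hcond : PrimrecPred fun b : (Wd n × ((Fin n × Bool) × Wd n × Wd n)) × ((Fin n × Bool) × Wd n) =>
        b.1.2.1.1 = b.2.1.1 ∧ b.1.2.1.2 = !b.2.1.2 :=
      PrimrecPred.and (Primrec.eq.comp (Primrec.fst.comp hhd1') (Primrec.fst.comp hhd2))
        (Primrec.eq.comp (Primrec.snd.comp hhd1') (Primrec.not.comp (Primrec.snd.comp hhd2)))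
    exact Primrec.ite hcond htl2
      (Primrec.list_cons.comp hhd1' (Primrec.list_cons.comp hhd2 htl2))
  exact h.of_eq fun w => by
    induction w with
    | nil => rfl
    | cons hd tl ih => rw [FreeGroup.reduce.cons]; simp only [← ih]

/-- The word given by the product of conjugates `g · r · g⁻¹` specified by `L`,
with relator words taken from `RR`. -/
def conjWord (RR : List (List (Fin n × Bool))) (L : List (List (Fin n × Bool) × ℕ)) :
    List (Fin n × Bool) :=
  (L.map fun p => p.1 ++ RR.getD p.2 [] ++ FreeGroup.invRev p.1).flatten

theorem primrec_conjWord : Primrec₂ (conjWord (n := n)) := by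
  have inner : Primrec₂ fun (q : List (List (Fin n × Bool)) × List (List (Fin n × Bool) × ℕ))
      (p : List (Fin n × Bool) × ℕ) => p.1 ++ q.1.getD p.2 [] ++ FreeGroup.invRev p.1 := by
    have hp1 : Primrec fun b : (List (List (Fin n × Bool)) × List (List (Fin n × Bool) × ℕ)) ×
        (List (Fin n × Bool) × ℕ) => b.2.1 := Primrec.fst.comp Primrec.snd
    have hgetD : Primrec fun b : (List (List (Fin n × Bool)) × List (List (Fin n × Bool) × ℕ)) ×
        (List (Fin n × Bool) × ℕ) => b.1.1.getD b.2.2 [] := by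
      have h1 : Primrec fun b : (List (List (Fin n × Bool)) × List (List (Fin n × Bool) × ℕ)) ×
          (List (Fin n × Bool) × ℕ) => (b.1.1[b.2.2]?).getD [] :=
        Primrec.option_getD.comp
          (Primrec.list_getElem?.comp (Primrec.fst.comp Primrec.fst) (Primrec.snd.comp Primrec.snd))
          (Primrec.const ([] : List (Fin n × Bool)))
      exact h1.of_eq fun b => List.getD_eq_getElem?_getD.symm
    exact Primrec.to₂ (Primrec.list_append.comp (Primrec.list_append.comp hp1 hgetD)
      (primrec_invRev.comp hp1))
  exact Primrec.to₂ <| Primrec.list_flatten.comp <| Primrec.list_map Primrec.snd inner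

theorem mk_conjWord (RR : List (List (Fin n × Bool))) (L : List (List (Fin n × Bool) × ℕ)) :
    FreeGroup.mk (conjWord RR L) =
      (L.map fun p => FreeGroup.mk p.1 * FreeGroup.mk (RR.getD p.2 []) * (FreeGroup.mk p.1)⁻¹).prod := by
  induction L with
  | nil => rfl
  | cons p L ih =>
      simp only [conjWord, List.map_cons, List.flatten_cons, List.prod_cons, ← ih, conjWord]
      rw [← FreeGroup.mul_mk, ← FreeGroup.mul_mk, ← FreeGroup.mul_mk, FreeGroup.inv_mk,
        mul_assoc, mul_assoc]

theorem mk_eq_mk_iff_reduce {v u : List (Fin n × Bool)} :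
    FreeGroup.mk v = FreeGroup.mk u ↔ FreeGroup.reduce v = FreeGroup.reduce u := by
  constructor
  · intro h
    rw [← FreeGroup.toWord_mk (L₁ := v), ← FreeGroup.toWord_mk (L₁ := u), h]
  · intro h
    apply FreeGroup.toWord_injective
    rw [FreeGroup.toWord_mk, FreeGroup.toWord_mk, h]

theorem getD_RR_mem (R : List (List (Fin n × Bool))) (k : ℕ) :
    FreeGroup.mk ((R ++ R.map FreeGroup.invRev).getD k []) ∈
      Subgroup.normalClosure {x : FreeGroup (Fin n) | ∃ r ∈ R, x = FreeGroup.mk r} := by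
  rw [List.getD_eq_getElem?_getD]
  cases h : (R ++ R.map FreeGroup.invRev)[k]? with
  | none =>
      exact (show FreeGroup.mk ([] : List (Fin n × Bool)) = 1 from rfl) ▸ one_mem _
  | some r =>
      have hmem : r ∈ R ++ R.map FreeGroup.invRev := List.mem_of_getElem? h
      rw [List.mem_append] at hmem
      simp only [Option.getD_some]
      rcases hmem with h' | h'
      · exact Subgroup.subset_normalClosure ⟨_, h', rfl⟩
      · rcases List.mem_map.mp h' with ⟨r', hr', hrr⟩
        rw [← hrr, ← FreeGroup.inv_mk]
        exact inv_mem (Subgroup.subset_normalClosure ⟨_, hr', rfl⟩)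

theorem mk_mem_normalClosure_iff (R : List (List (Fin n × Bool))) (v : List (Fin n × Bool)) :
    FreeGroup.mk v ∈ Subgroup.normalClosure {x : FreeGroup (Fin n) | ∃ r ∈ R, x = FreeGroup.mk r} ↔
      ∃ L, FreeGroup.reduce v = FreeGroup.reduce (conjWord (R ++ R.map FreeGroup.invRev) L) := by
  constructor
  · intro hx
    rw [Subgroup.normalClosure, ← Subgroup.mem_toSubmonoid, Subgroup.closure_toSubmonoid] at hx
    obtain ⟨l, hl, hprod⟩ := Submonoid.exists_list_of_mem_closure hx
    suffices h : ∀ l : List (FreeGroup (Fin n)),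
        (∀ y ∈ l, y ∈ Group.conjugatesOfSet {x : FreeGroup (Fin n) | ∃ r ∈ R, x = FreeGroup.mk r}
          ∪ (Group.conjugatesOfSet {x : FreeGroup (Fin n) | ∃ r ∈ R, x = FreeGroup.mk r})⁻¹) →
        ∃ L : List (List (Fin n × Bool) × ℕ), (L.map fun p => FreeGroup.mk p.1 *
          FreeGroup.mk ((R ++ R.map FreeGroup.invRev).getD p.2 []) *
          (FreeGroup.mk p.1)⁻¹).prod = l.prod by
      obtain ⟨L, hL⟩ := h l hl
      exact ⟨L, mk_eq_mk_iff_reduce.mp (by rw [mk_conjWord, hL, hprod])⟩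
    intro l hl
    induction l with
    | nil => exact ⟨[], rfl⟩
    | cons y l ih =>
        obtain ⟨L, hL⟩ := ih fun z hz => hl z (List.mem_cons_of_mem _ hz)
        have hy := hl y List.mem_cons_self
        rcases hy with hy | hy
        · rcases Group.mem_conjugatesOfSet_iff.mp hy with ⟨a, ha, hconj⟩
          rcases isConj_iff.mp hconj with ⟨c, hc⟩
          rcases ha with ⟨r, hrR, rfl⟩
          rcases List.mem_iff_getElem.mp hrR with ⟨k, hk, hrk⟩
          refine ⟨(FreeGroup.toWord c, k) :: L, ?_⟩
          have hget : (R ++ R.map FreeGroup.invRev).getD k [] = r := by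
            rw [List.getD_eq_getElem _ _ (by simp; omega), List.getElem_append_left hk, hrk]
          simp only [List.map_cons, List.prod_cons, hL, hget, FreeGroup.mk_toWord, hc]
        · rw [Set.mem_inv] at hy
          rcases Group.mem_conjugatesOfSet_iff.mp hy with ⟨a, ha, hconj⟩
          rcases isConj_iff.mp hconj with ⟨c, hc⟩
          rcases ha with ⟨r, hrR, rfl⟩
          rcases List.mem_iff_getElem.mp hrR with ⟨k, hk, hrk⟩
          refine ⟨(FreeGroup.toWord c, R.length + k) :: L, ?_⟩
          have hget : (R ++ R.map FreeGroup.invRev).getD (R.length + k) [] =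
              FreeGroup.invRev r := by
            rw [List.getD_eq_getElem _ _ (by simp; omega),
              List.getElem_append_right (by omega)]
            simp [hrk]
          have hy' : y = c * (FreeGroup.mk r)⁻¹ * c⁻¹ := by
            have h2 := congrArg (·⁻¹) hc
            simp only [mul_inv_rev, inv_inv] at h2
            rw [← h2]; group
          simp only [List.map_cons, List.prod_cons, hL, hget, FreeGroup.mk_toWord,
            ← FreeGroup.inv_mk, ← hy']
  · rintro ⟨L, hL⟩
    rw [mk_eq_mk_iff_reduce.mpr hL, mk_conjWord]
    refine list_prod_mem fun z hz => ?_
    rcases List.mem_map.mp hz with ⟨p, -, rfl⟩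
    exact Subgroup.normalClosure_normal.conj_mem _ (getD_RR_mem R p.2) _

theorem subgroup_eq_top_iff_of (K : Subgroup (FreeGroup (Fin n))) :
    K = ⊤ ↔ ∀ i : Fin n, FreeGroup.of i ∈ K := by
  constructor
  · intro h i; rw [h]; trivial
  · intro h
    rw [eq_top_iff]
    intro y _
    have hall : ∀ z : FreeGroup (Fin n), z ∈ K := by
      intro z
      induction z using FreeGroup.induction_on with
      | C1 => exact one_mem K
      | of i => exact h i
      | inv_of i hi => exact inv_mem hi
      | mul a b ha hb => exact mul_mem ha hb
    exact hall y

theorem not_mem_iff_normalClosure_insert_eq_top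
    {S : Type*} [Group S] [IsSimpleGroup S]
    {rels : Set (FreeGroup (Fin n))} (π : FreeGroup (Fin n) →* S)
    (hsurj : Function.Surjective π)
    (hker : ∀ y, π y = 1 ↔ y ∈ Subgroup.normalClosure rels)
    (x : FreeGroup (Fin n)) :
    x ∉ Subgroup.normalClosure rels ↔
      Subgroup.normalClosure (insert x rels) = ⊤ := by
  constructor
  · intro hx
    set K := Subgroup.normalClosure (insert x rels) with hK
    have hKn : (K.map π).Normal := Subgroup.Normal.map Subgroup.normalClosure_normal π hsurj
    have hne : K.map π ≠ ⊥ := by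
      intro hbot
      have hmem : π x ∈ K.map π :=
        ⟨x, Subgroup.subset_normalClosure (Set.mem_insert _ _), rfl⟩
      rw [hbot, Subgroup.mem_bot] at hmem
      exact hx ((hker x).mp hmem)
    have htop : K.map π = ⊤ := (hKn.eq_bot_or_eq_top).resolve_left hne
    rw [eq_top_iff]
    intro y _
    have hmem : π y ∈ K.map π := htop ▸ Subgroup.mem_top _
    rcases hmem with ⟨k, hk, hky⟩
    have h1 : π (k⁻¹ * y) = 1 := by rw [map_mul, map_inv, hky]; group
    have h2 : k⁻¹ * y ∈ Subgroup.normalClosure rels := (hker _).mp h1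
    have h3 : k⁻¹ * y ∈ K := Subgroup.normalClosure_mono (Set.subset_insert x rels) h2
    simpa using mul_mem hk h3
  · intro htop hx
    have hN : Subgroup.normalClosure (insert x rels) ≤ Subgroup.normalClosure rels := by
      apply Subgroup.normalClosure_le_normal
      rw [Set.insert_subset_iff]
      exact ⟨hx, Subgroup.subset_normalClosure⟩
    rw [htop] at hN
    obtain ⟨a, b, hab⟩ := exists_pair_ne S
    obtain ⟨ya, rfl⟩ := hsurj a
    obtain ⟨yb, rfl⟩ := hsurj b
    exact hab (((hker ya).mpr (hN (Subgroup.mem_top ya))).trans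
      ((hker yb).mpr (hN (Subgroup.mem_top yb))).symm)

theorem forall_fin_exists_iff_exists_list {β : Type*} {P : Fin n → List β → Prop} :
    (∀ i : Fin n, ∃ L : List β, P i L) ↔
      ∃ LL : List (List β), ∀ i : Fin n, P i (LL.getD i []) := by
  constructor
  · intro h
    choose f hf using h
    refine ⟨(List.finRange n).map f, fun i => ?_⟩
    have hlen : (i : ℕ) < ((List.finRange n).map f).length := by simp [i.isLt]
    rw [List.getD_eq_getElem _ _ hlen]
    simp only [List.getElem_map, List.getElem_finRange, Fin.eta, Fin.cast_mk]
    exact hf i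
  · rintro ⟨LL, h⟩ i
    exact ⟨LL.getD i [], h i⟩

/-- The word problem of a finitely presented simple group is computable. -/
theorem computablePred_word_problem
    {S : Type*} [Group S] [IsSimpleGroup S]
    {rels : Set (FreeGroup (Fin n))} (hfin : rels.Finite)
    (π : FreeGroup (Fin n) →* S) (hsurj : Function.Surjective π)
    (hker : ∀ y, π y = 1 ↔ y ∈ Subgroup.normalClosure rels) :
    ComputablePred fun w : List (Fin n × Bool) => π (FreeGroup.mk w) = 1 := by
  obtain ⟨R, hR⟩ : ∃ R : List (List (Fin n × Bool)),
      {x : FreeGroup (Fin n) | ∃ r ∈ R, x = FreeGroup.mk r} = rels := by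
    refine ⟨hfin.toFinset.toList.map FreeGroup.toWord, ?_⟩
    ext x
    simp only [Set.mem_setOf_eq, List.mem_map]
    constructor
    · rintro ⟨r, ⟨y, hy, rfl⟩, rfl⟩
      rw [FreeGroup.mk_toWord]
      exact (Set.Finite.mem_toFinset hfin).mp (Finset.mem_toList.mp hy)
    · intro hx
      exact ⟨FreeGroup.toWord x,
        ⟨x, Finset.mem_toList.mpr ((Set.Finite.mem_toFinset hfin).mpr hx), rfl⟩,
        (FreeGroup.mk_toWord).symm⟩
  rw [ComputablePred.computable_iff_re_compl_re']
  constructor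
  · -- r.e. : search for an expression as a product of conjugates of relators
    have hf : Primrec fun q : List (Fin n × Bool) × List (List (Fin n × Bool) × ℕ) =>
        decide (FreeGroup.reduce q.1 =
          FreeGroup.reduce (conjWord (R ++ R.map FreeGroup.invRev) q.2)) :=
      PrimrecPred.decide (Primrec.eq.comp (primrec_reduce.comp Primrec.fst)
        (primrec_reduce.comp (primrec_conjWord.comp (Primrec.const _) Primrec.snd)))
    have hre := rePred_exists
      (f := fun (w : List (Fin n × Bool)) (L : List (List (Fin n × Bool) × ℕ)) =>
        decide (FreeGroup.reduce w = FreeGroup.reduce (conjWord (R ++ R.map FreeGroup.invRev) L)))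
      hf.to_comp.to₂
    refine hre.of_eq fun w => ?_
    simp only [decide_eq_true_eq]
    rw [← mk_mem_normalClosure_iff, hR, ← hker]
  · -- co-r.e. : search for proofs that all generators die after adding `w` as a relator
    have key : ∀ l : List (Fin n),
        PrimrecPred fun q : List (Fin n × Bool) × List (List (List (Fin n × Bool) × ℕ)) =>
          ∀ i ∈ l, FreeGroup.reduce [(i, true)] =
            FreeGroup.reduce (conjWord ((q.1 :: R) ++ (q.1 :: R).map FreeGroup.invRev)
              (q.2.getD (i : ℕ) [])) := by
      intro l
      induction l with
      | nil => exact ((Primrec.const true).primrecPred (p := fun _ => True)).of_eq fun q => by simp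
      | cons i l ih =>
          have hRR : Primrec fun q : List (Fin n × Bool) × List (List (List (Fin n × Bool) × ℕ)) =>
              (q.1 :: R) ++ (q.1 :: R).map FreeGroup.invRev :=
            Primrec.list_append.comp (Primrec.list_cons.comp Primrec.fst (Primrec.const R))
              (Primrec.list_map (Primrec.list_cons.comp Primrec.fst (Primrec.const R))
                (primrec_invRev.comp Primrec.snd).to₂)
          have hgetD : Primrec fun q : List (Fin n × Bool) × List (List (List (Fin n × Bool) × ℕ)) =>
              q.2.getD (i : ℕ) [] := by
            have h1 : Primrec fun q : List (Fin n × Bool) × List (List (List (Fin n × Bool) × ℕ)) =>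
                (q.2[(i : ℕ)]?).getD [] :=
              Primrec.option_getD.comp
                (Primrec.list_getElem?.comp Primrec.snd (Primrec.const ((i : ℕ))))
                (Primrec.const ([] : List (List (Fin n × Bool) × ℕ)))
            exact h1.of_eq fun q => List.getD_eq_getElem?_getD.symm
          have hhead : PrimrecPred fun q : List (Fin n × Bool) ×
              List (List (List (Fin n × Bool) × ℕ)) =>
              FreeGroup.reduce [(i, true)] =
                FreeGroup.reduce (conjWord ((q.1 :: R) ++ (q.1 :: R).map FreeGroup.invRev)
                  (q.2.getD (i : ℕ) [])) :=
            Primrec.eq.comp (Primrec.const _)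
              (primrec_reduce.comp (primrec_conjWord.comp hRR hgetD))
          refine (hhead.and ih).of_eq fun q => ?_
          simp [List.forall_mem_cons]
    have hf := key (List.finRange n)
    have hre := rePred_exists
      (f := fun (w : List (Fin n × Bool)) (LL : List (List (List (Fin n × Bool) × ℕ))) =>
        decide (∀ i ∈ List.finRange n, FreeGroup.reduce [(i, true)] =
          FreeGroup.reduce (conjWord ((w :: R) ++ (w :: R).map FreeGroup.invRev)
            (LL.getD (i : ℕ) []))))
      hf.decide.to_comp.to₂
    refine hre.of_eq fun w => ?_
    simp only [decide_eq_true_eq, List.mem_finRange, true_implies]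
    have h3 : insert (FreeGroup.mk w) rels =
        {x : FreeGroup (Fin n) | ∃ r ∈ w :: R, x = FreeGroup.mk r} := by
      rw [← hR]
      ext x
      simp only [Set.mem_insert_iff, Set.mem_setOf_eq, List.mem_cons]
      constructor
      · rintro (rfl | ⟨r, hr, rfl⟩)
        · exact ⟨w, Or.inl rfl, rfl⟩
        · exact ⟨r, Or.inr hr, rfl⟩
      · rintro ⟨r, hr | hr, rfl⟩
        · exact Or.inl (by rw [hr])
        · exact Or.inr ⟨r, hr, rfl⟩
    have hiff : ¬π (FreeGroup.mk w) = 1 ↔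
        ∀ i : Fin n, ∃ L : List (List (Fin n × Bool) × ℕ),
          FreeGroup.reduce [(i, true)] =
            FreeGroup.reduce (conjWord ((w :: R) ++ (w :: R).map FreeGroup.invRev) L) := by
      rw [hker, not_mem_iff_normalClosure_insert_eq_top π hsurj hker, h3,
        subgroup_eq_top_iff_of]
      exact forall_congr' fun i => mk_mem_normalClosure_iff (w :: R) [(i, true)]
    rw [hiff]
    exact (forall_fin_exists_iff_exists_list (P := fun i L =>
      FreeGroup.reduce [(i, true)] =
        FreeGroup.reduce (conjWord ((w :: R) ++ (w :: R).map FreeGroup.invRev) L))).symm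

section Gside
variable {nG nS : ℕ}

/-- Substitute each generator letter of a `G`-word by a fixed `S`-word. -/
def substWord (WL : List (List (Fin nS × Bool))) (w : List (Fin nG × Bool)) :
    List (Fin nS × Bool) :=
  (w.map fun p =>
    bif p.2 then WL.getD (p.1 : ℕ) [] else FreeGroup.invRev (WL.getD (p.1 : ℕ) [])).flatten

theorem primrec_substWord (WL : List (List (Fin nS × Bool))) :
    Primrec (substWord (nG := nG) WL) := by
  have hget : Primrec fun b : List (Fin nG × Bool) × (Fin nG × Bool) =>
      WL.getD ((b.2.1 : Fin nG) : ℕ) [] := by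
    have h1 : Primrec fun b : List (Fin nG × Bool) × (Fin nG × Bool) =>
        (WL[((b.2.1 : Fin nG) : ℕ)]?).getD [] :=
      Primrec.option_getD.comp (Primrec.list_getElem?.comp (Primrec.const WL)
        (Primrec.fin_val.comp (Primrec.fst.comp Primrec.snd)))
        (Primrec.const ([] : List (Fin nS × Bool)))
    exact h1.of_eq fun b => List.getD_eq_getElem?_getD.symm
  exact Primrec.list_flatten.comp <| Primrec.list_map Primrec.id <| Primrec.to₂ <|
    Primrec.cond (Primrec.snd.comp Primrec.snd) hget (primrec_invRev.comp hget)

theorem mk_substWord (WL : List (List (Fin nS × Bool))) (w : List (Fin nG × Bool)) :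
    FreeGroup.mk (substWord WL w) =
      FreeGroup.lift (fun i : Fin nG => FreeGroup.mk (WL.getD (i : ℕ) [])) (FreeGroup.mk w) := by
  induction w with
  | nil =>
      rw [show FreeGroup.mk ([] : List (Fin nG × Bool)) = 1 from rfl]
      rw [map_one]; rfl
  | cons p w ih =>
      have hsplit : FreeGroup.mk (p :: w) = FreeGroup.mk [p] * FreeGroup.mk w := by
        rw [FreeGroup.mul_mk]; rfl
      have hflat : substWord WL (p :: w) =
          (bif p.2 then WL.getD (p.1 : ℕ) [] else FreeGroup.invRev (WL.getD (p.1 : ℕ) []))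
            ++ substWord WL w := by
        simp [substWord]
      rw [hflat, ← FreeGroup.mul_mk, ih, hsplit, map_mul]
      congr 1
      rcases p with ⟨i, b⟩
      cases b
      · have h1 : FreeGroup.mk [((i : Fin nG), false)] = (FreeGroup.of i)⁻¹ := by
          rw [show [((i : Fin nG), false)] = FreeGroup.invRev [(i, true)] by
              simp [FreeGroup.invRev],
            ← FreeGroup.inv_mk]
          rfl
        simp only [cond_false, h1, map_inv, FreeGroup.lift_apply_of, FreeGroup.inv_mk]
      · simp only [cond_true]
        exact (FreeGroup.lift_apply_of).symm

end Gside

end KuznetsovAux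

/-- A group has solvable word problem if for some finite generating family
(a surjection from a free group of finite rank) the set of words representing
the identity is computable. -/
def HasSolvableWordProblem (G : Type*) [Group G] : Prop :=
  ∃ (n : ℕ) (π : FreeGroup (Fin n) →* G), Function.Surjective π ∧
    ComputablePred (fun w : List (Fin n × Bool) => π (FreeGroup.mk w) = 1)

/-- A group is finitely presented if it is isomorphic to a presented group on
finitely many generators with finitely many relators. -/
def IsFinitelyPresentedGroup (S : Type*) [Group S] : Prop :=
  ∃ (n : ℕ) (rels : Set (FreeGroup (Fin n))), rels.Finite ∧
    Nonempty (PresentedGroup rels ≃* S)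

/-- Kuznetsov: a finitely generated group that embeds in a finitely presented
simple group has solvable word problem. -/
theorem solvable_word_problem_of_embeds_in_fp_simple
    (G : Type*) [Group G] [Group.FG G]
    (S : Type*) [Group S] (hfp : IsFinitelyPresentedGroup S) (hsimple : IsSimpleGroup S)
    (hembed : ∃ φ : G →* S, Function.Injective φ) :
    HasSolvableWordProblem G := by
  haveI := hsimple
  obtain ⟨nS, rels, hfin, ⟨e⟩⟩ := hfp
  obtain ⟨φ, hφ⟩ := hembed
  obtain ⟨Sset, hSclosure, hSfin⟩ := Group.fg_iff.mp ‹Group.FG G›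
  set TL := hSfin.toFinset.toList with hTL
  set g : Fin TL.length → G := TL.get with hg
  set πG : FreeGroup (Fin TL.length) →* G := FreeGroup.lift g with hπG
  have hrange : Set.range g = Sset := by
    ext x
    constructor
    · rintro ⟨i, rfl⟩
      have hmem : TL.get i ∈ TL := TL.get_mem i
      exact (Set.Finite.mem_toFinset hSfin).mp (Finset.mem_toList.mp hmem)
    · intro hx
      have hmem : x ∈ TL := Finset.mem_toList.mpr ((Set.Finite.mem_toFinset hSfin).mpr hx)
      obtain ⟨i, hi⟩ := List.mem_iff_get.mp hmem
      exact ⟨i, hi⟩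
  have hπGsurj : Function.Surjective πG := by
    rw [← MonoidHom.range_eq_top, hπG, FreeGroup.range_lift_eq_closure, hrange, hSclosure]
  set πS : FreeGroup (Fin nS) →* S := e.toMonoidHom.comp (PresentedGroup.mk rels) with hπS
  have hπSsurj : Function.Surjective πS :=
    e.surjective.comp (PresentedGroup.mk_surjective rels)
  have hπSker : ∀ y, πS y = 1 ↔ y ∈ Subgroup.normalClosure rels := by
    intro y
    rw [hπS, MonoidHom.comp_apply, map_eq_one_iff e.toMonoidHom e.injective]
    exact QuotientGroup.eq_one_iff y
  have hchoice : ∀ i : Fin TL.length, ∃ x : FreeGroup (Fin nS), πS x = φ (πG (FreeGroup.of i)) :=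
    fun i => hπSsurj _
  choose xw hxw using hchoice
  set WL : List (List (Fin nS × Bool)) := (List.finRange TL.length).map fun i => (xw i).toWord
    with hWLdef
  have hWL : ∀ i : Fin TL.length, WL.getD (i : ℕ) [] = (xw i).toWord := by
    intro i
    have hlen : (i : ℕ) < WL.length := by simp [hWLdef, i.isLt]
    rw [List.getD_eq_getElem _ _ hlen]
    simp [hWLdef]
  set ψ : FreeGroup (Fin TL.length) →* FreeGroup (Fin nS) :=
    FreeGroup.lift (fun i : Fin TL.length => FreeGroup.mk (WL.getD (i : ℕ) [])) with hψ
  have hcomm : ∀ x, φ (πG x) = πS (ψ x) := by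
    intro x
    have hext := FreeGroup.ext_hom (φ.comp πG) (πS.comp ψ) ?_
    · exact DFunLike.congr_fun hext x
    · intro i
      simp only [MonoidHom.comp_apply]
      rw [hψ, show FreeGroup.lift (fun i : Fin TL.length => FreeGroup.mk (WL.getD (i : ℕ) []))
          (FreeGroup.of i) = FreeGroup.mk (WL.getD (i : ℕ) []) from FreeGroup.lift_apply_of,
        hWL i, FreeGroup.mk_toWord, hxw i]
  have hS := KuznetsovAux.computablePred_word_problem hfin πS hπSsurj hπSker
  refine ⟨TL.length, πG, hπGsurj, ?_⟩
  obtain ⟨f, hfcomp, hfeq⟩ := ComputablePred.computable_iff.mp hS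
  refine ComputablePred.computable_iff.mpr ⟨fun w => f (KuznetsovAux.substWord WL w),
    hfcomp.comp (KuznetsovAux.primrec_substWord WL).to_comp, ?_⟩
  funext w
  have h1 : (πG (FreeGroup.mk w) = 1) ↔ (πS (FreeGroup.mk (KuznetsovAux.substWord WL w)) = 1) := by
    rw [KuznetsovAux.mk_substWord, ← hψ, ← hcomm]
    exact (map_eq_one_iff φ hφ).symm
  rw [propext h1]
  exact congrFun hfeq (KuznetsovAux.substWord WL w)
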